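/- arXiv:2507.01877 — 3 statements merged into one kernel-verified Lean document; each statement's English description precedes it below -/
import Mathlib

section
/- Let H(T) = Σ_{i≥0} hᵢ Tⁱ = ∏ᵢ (1 − xᵢT)^{−1} be the generating function of complete homogeneous symmetric functions (in N variables). Applying the derivation Lₙ(f) = −Σᵢ xᵢ^{n+1} ∂f/∂xᵢ coefficientwise for n ≥ 1 yields Lₙ(H(T)) = Σ_{j=0}^{n−1} T^{−j} p_{n−j} H(T) − Σ_{i≥0} i·hᵢ·T^{i−n}, as an identity of formal Laurent series in T; equivalently, comparing coefficients of Tᵐ gives Lₙ(hₘ) = −(n+m)h_{n+m} + Σ_{j=0}^{n−1} p_{n−j}h_{m+j}. -/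
/-!
Differentiating `h_{m+1} = xᵢ h_m + (terms free of xᵢ)` gives `∂ᵢ h_{m+1} = h_m + xᵢ ∂ᵢ h_m`,
and induction on `n` turns this into
`xᵢ^{n+1} ∂ᵢ h_m + ∑_{j<n} xᵢ^{n-j} h_{m+j} = xᵢ ∂ᵢ h_{m+n}` for each variable.
Summing over `i`, the right side becomes `(m+n) h_{m+n}` by Euler's identity, and the sum on
the left collects into `∑_{j<n} p_{n-j} h_{m+j}`.
-/

open MvPolynomial Finset

namespace MvPolynomial

variable {σ R : Type*} [CommSemiring R]

theorem coeff_X_mul_pderiv (i : σ) (p : MvPolynomial σ R) (d : σ →₀ ℕ) :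
    coeff d (X i * pderiv i p) = d i • coeff d p := by
  classical
  induction p using MvPolynomial.induction_on' with
  | add p q hp hq => simp only [map_add, mul_add, coeff_add, hp, hq, smul_add]
  | monomial e r =>
    rw [X_mul_pderiv_monomial, coeff_smul, coeff_monomial]
    split_ifs with h
    · rw [h]
    · rw [smul_zero, smul_zero]

theorem multiset_prod_map_X [DecidableEq σ] (μ : Multiset σ) :
    (μ.map X).prod = monomial (Multiset.toFinsupp μ) (1 : R) := by
  induction μ using Multiset.induction with
  | empty => simp
  | cons a μ ih =>
    rw [Multiset.map_cons, Multiset.prod_cons, ih, ← Multiset.singleton_add,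
      Multiset.toFinsupp_add, Multiset.toFinsupp_singleton, X, monomial_mul, one_mul]

variable (σ R) [Fintype σ] [DecidableEq σ]

theorem hsymm_eq_sum_monomial (m : ℕ) :
    hsymm σ R m = ∑ s : Sym σ m, monomial (Sym.equivNatSum σ m s : σ →₀ ℕ) 1 :=
  Finset.sum_congr rfl fun s _ ↦ multiset_prod_map_X s.1

theorem coeff_hsymm (m : ℕ) (d : σ →₀ ℕ) :
    coeff d (hsymm σ R m) = if d.degree = m then 1 else 0 := by
  simp only [hsymm_eq_sum_monomial, coeff_sum, coeff_monomial]
  split_ifs with hd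
  · have hs (s : Sym σ m) :
        (Sym.equivNatSum σ m s : σ →₀ ℕ) = d ↔
          s = (Sym.equivNatSum σ m).symm ⟨d, hd⟩ := by
      rw [Equiv.eq_symm_apply, Subtype.ext_iff]
    simp_rw [hs]
    exact Fintype.sum_ite_eq' _ _
  · refine Finset.sum_eq_zero fun s _ ↦ if_neg ?_
    rintro rfl
    exact hd (Sym.equivNatSum σ m s).2

theorem isHomogeneous_hsymm (m : ℕ) : (hsymm σ R m).IsHomogeneous m := by
  rw [hsymm_eq_sum_monomial]
  exact IsHomogeneous.sum _ _ _ fun s _ ↦ isHomogeneous_monomial _ (Sym.equivNatSum σ m s).2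

theorem pderiv_hsymm_succ (i : σ) (m : ℕ) :
    pderiv i (hsymm σ R (m + 1)) = hsymm σ R m + X i * pderiv i (hsymm σ R m) := by
  ext d
  rw [coeff_add, coeff_pderiv, coeff_X_mul_pderiv, coeff_hsymm, coeff_hsymm, map_add,
    Finsupp.degree_single]
  by_cases hd : d.degree = m
  · simp only [hd, if_true, one_mul, nsmul_eq_mul, mul_one]
    ring
  · simp [hd]

theorem X_pow_mul_pderiv_hsymm_add_sum (i : σ) (n m : ℕ) :
    X i ^ (n + 1) * pderiv i (hsymm σ R m) + ∑ j ∈ range n, X i ^ (n - j) * hsymm σ R (m + j)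
      = X i * pderiv i (hsymm σ R (m + n)) := by
  induction n generalizing m with
  | zero => simp
  | succ n ih =>
    rw [show m + (n + 1) = m + 1 + n by omega, ← ih (m + 1), sum_range_succ', pderiv_hsymm_succ]
    simp only [Nat.add_sub_add_right, Nat.sub_zero, add_zero, add_assoc m 1, add_comm 1]
    ring

theorem sum_X_pow_mul_pderiv_hsymm_add_sum_psum_mul_hsymm (n m : ℕ) :
    ∑ i, X i ^ (n + 1) * pderiv i (hsymm σ R m)
        + ∑ j ∈ range n, psum σ R (n - j) * hsymm σ R (m + j)
      = (m + n) • hsymm σ R (m + n) := by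
  simp only [psum, sum_mul]
  rw [sum_comm, ← sum_add_distrib, ← (isHomogeneous_hsymm σ R (m + n)).sum_X_mul_pderiv]
  exact sum_congr rfl fun i _ ↦ X_pow_mul_pderiv_hsymm_add_sum σ R i n m

end MvPolynomial

theorem wittOp_genfun_hsymm_general (N : ℕ) (n : ℕ) :
    PowerSeries.mk
        (fun m => - ∑ i : Fin N, X i ^ (n + 1) * pderiv i (hsymm (Fin N) ℚ m))
      = PowerSeries.mk
        (fun m => -(((n + m : ℕ) : ℚ)) • hsymm (Fin N) ℚ (n + m)
          + ∑ j ∈ range n, psum (Fin N) ℚ (n - j) * hsymm (Fin N) ℚ (m + j)) := by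
  refine congrArg PowerSeries.mk (funext fun m ↦ ?_)
  rw [add_comm n m, neg_smul, Nat.cast_smul_eq_nsmul,
    ← sum_X_pow_mul_pderiv_hsymm_add_sum_psum_mul_hsymm]
  abel

/-- Applying Lₙ = -∑ᵢ xᵢ^{n+1}∂/∂xᵢ coefficientwise to the generating function
H(T) = ∑ hₘ Tᵐ of complete homogeneous symmetric polynomials yields, comparing
coefficients of Tᵐ: Lₙ(hₘ) = -(n+m)h_{n+m} + ∑_{j=0}^{n-1} p_{n-j} h_{m+j},
stated here as an equality of formal power series in T. -/
theorem wittOp_genfun_hsymm (N : ℕ) (n : ℕ) (hn : 1 ≤ n) :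
    PowerSeries.mk
        (fun m => - ∑ i : Fin N, X i ^ (n + 1) * pderiv i (hsymm (Fin N) ℚ m))
      = PowerSeries.mk
        (fun m => -(((n + m : ℕ) : ℚ)) • hsymm (Fin N) ℚ (n + m)
          + ∑ j ∈ range n, psum (Fin N) ℚ (n - j) * hsymm (Fin N) ℚ (m + j)) :=
  wittOp_genfun_hsymm_general N n
end

section
/- For the derivation L₁(f) = −Σᵢ xᵢ² ∂f/∂xᵢ on symmetric polynomials, one has L₁(hₘ) = −(m+1)h_{m+1} + p₁hₘ for all m ≥ 0, and L₁(eₘ) = (m+1)e_{m+1} − p₁eₘ. -/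
/-!
`X i * pderiv i` is the Euler operator in `xᵢ`: it multiplies a monomial by its degree in `xᵢ`.
Hence `p₁ xˢ ± ∑ᵢ xᵢ² ∂ᵢ xˢ = ∑ᵢ (1 ± degᵢ xˢ) xᵢ xˢ`. For `hₘ` the coefficient `1 + degᵢ xˢ`
is the `xᵢ`-degree of `xᵢ xˢ`; for `eₘ` the coefficient `1 - degᵢ xˢ` is `1` when `xᵢ xˢ` is
squarefree and `0` otherwise. Regrouping by `xᵢ xˢ`, each monomial of `h_{m+1}` (resp. `e_{m+1}`)
collects the total weight `∑ᵢ degᵢ = m + 1`.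
-/

open MvPolynomial

theorem Sym.sum_cons_eq_sum {α M : Type*} [Fintype α] [DecidableEq α] [AddCommMonoid M]
    {n : ℕ} (a : α) (g : Sym α (n + 1) → M) (hg : ∀ s, a ∉ s → g s = 0) :
    ∑ s : Sym α n, g (a ::ₛ s) = ∑ s, g s := by
  refine Finset.sum_of_injOn (a ::ₛ ·) (fun s _ t _ h => (Sym.cons_inj_right a s t).1 h)
    (fun _ _ => Finset.mem_univ _) (fun s _ hs => hg s fun ha => hs ?_) (fun _ _ => rfl)
  exact ⟨s.erase a ha, by simp, Sym.cons_erase ha⟩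

theorem Finset.sum_powersetCard_insert {α M : Type*} [DecidableEq α] [AddCommMonoid M]
    {s : Finset α} {a : α} (ha : a ∈ s) (n : ℕ) (f : Finset α → M) :
    ∑ t ∈ s.powersetCard n with a ∉ t, f (insert a t) =
      ∑ u ∈ s.powersetCard (n + 1) with a ∈ u, f u := by
  refine Finset.sum_nbij' (insert a) (·.erase a) ?_ ?_ (fun t ht => ?_) (fun u hu => ?_)
    (fun _ _ => rfl)
  · intro t ht
    simp only [Finset.mem_filter, Finset.mem_powersetCard] at ht ⊢
    simp [Finset.insert_subset ha ht.1.1, Finset.card_insert_of_notMem ht.2, ht.1.2]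
  · intro u hu
    simp only [Finset.mem_filter, Finset.mem_powersetCard] at hu ⊢
    simp [(Finset.erase_subset a u).trans hu.1.1, Finset.card_erase_of_mem hu.2, hu.1.2]
  · exact Finset.erase_insert (Finset.mem_filter.1 ht).2
  · exact Finset.insert_erase (Finset.mem_filter.1 hu).2

namespace MvPolynomial

variable {σ R : Type*} [DecidableEq σ]

section CommSemiring

variable [CommSemiring R]

theorem X_mul_pderiv_multiset_prod_X (i : σ) (s : Multiset σ) :
    X i * pderiv i (s.map X).prod = s.count i • (s.map (X : σ → MvPolynomial σ R)).prod := by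
  induction s using Multiset.induction with
  | empty => simp
  | cons a s ih =>
    simp only [Multiset.map_cons, Multiset.prod_cons, Derivation.leibniz, smul_eq_mul, mul_add,
      mul_left_comm (X i) (X a), ih, Multiset.count_cons]
    rcases eq_or_ne a i with rfl | h
    · simp only [nsmul_eq_mul, pderiv_X_self, mul_one, if_pos, add_smul, one_smul]
      ring
    · simp only [pderiv_X_of_ne h, mul_zero, add_zero, h.symm, if_false, mul_smul_comm]

theorem X_mul_pderiv_prod_X (i : σ) (t : Finset σ) :
    X i * pderiv i (∏ j ∈ t, X j) =
      if i ∈ t then ∏ j ∈ t, (X j : MvPolynomial σ R) else 0 := by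
  rw [Finset.prod_eq_multiset_prod, X_mul_pderiv_multiset_prod_X,
    Multiset.count_eq_of_nodup t.nodup]
  by_cases hi : i ∈ t <;> simp [hi]

theorem X_sq_mul_pderiv_multiset_prod_X (i : σ) (s : Multiset σ) :
    X i ^ 2 * pderiv i (s.map X).prod =
      s.count i • ((i ::ₘ s).map (X : σ → MvPolynomial σ R)).prod := by
  rw [sq, mul_assoc, X_mul_pderiv_multiset_prod_X, Multiset.map_cons, Multiset.prod_cons,
    mul_smul_comm]

theorem psum_one_mul_hsymm_add_sum_X_sq_mul_pderiv [Fintype σ] (m : ℕ) :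
    psum σ R 1 * hsymm σ R m + ∑ i, X i ^ 2 * pderiv i (hsymm σ R m) =
      (m + 1) • hsymm σ R (m + 1) := by
  have hterm (i : σ) (s : Sym σ m) :
      X i * ((s : Multiset σ).map (X : σ → MvPolynomial σ R)).prod +
          X i ^ 2 * pderiv i ((s : Multiset σ).map X).prod =
        (i ::ₛ s : Multiset σ).count i • ((i ::ₛ s : Multiset σ).map X).prod := by
    rw [X_sq_mul_pderiv_multiset_prod_X, Sym.coe_cons, Multiset.count_cons_self, succ_nsmul',
      Multiset.map_cons, Multiset.prod_cons]
  calc psum σ R 1 * hsymm σ R m + ∑ i, X i ^ 2 * pderiv i (hsymm σ R m)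
      = ∑ i, ∑ s : Sym σ m, (X i * ((s : Multiset σ).map X).prod +
          X i ^ 2 * pderiv i ((s : Multiset σ).map X).prod) := by
        rw [psum, Finset.sum_mul, ← Finset.sum_add_distrib]
        simp only [pow_one, hsymm, Sym.val_eq_coe, map_sum, Finset.mul_sum, Finset.sum_add_distrib]
    _ = ∑ i, ∑ s : Sym σ (m + 1),
          (s : Multiset σ).count i • ((s : Multiset σ).map X).prod := by
        simp only [hterm]
        refine Finset.sum_congr rfl fun i _ => Sym.sum_cons_eq_sum i
          (fun s => (s : Multiset σ).count i • ((s : Multiset σ).map X).prod) fun s hi => ?_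
        rw [Multiset.count_eq_zero_of_notMem (Sym.mem_coe.not.2 hi), zero_smul]
    _ = (m + 1) • hsymm σ R (m + 1) := by
        simp only [hsymm, Sym.val_eq_coe]
        rw [Finset.sum_comm, Finset.smul_sum]
        refine Finset.sum_congr rfl fun s _ => ?_
        rw [← Finset.sum_smul, Multiset.sum_count_eq_card fun _ _ => Finset.mem_univ _,
          s.card_coe]

end CommSemiring

theorem psum_one_mul_esymm_sub_sum_X_sq_mul_pderiv [CommRing R] [Fintype σ] (m : ℕ) :
    psum σ R 1 * esymm σ R m - ∑ i, X i ^ 2 * pderiv i (esymm σ R m) =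
      (m + 1) • esymm σ R (m + 1) := by
  have hterm (i : σ) (t : Finset σ) :
      X i * ∏ j ∈ t, X j - X i ^ 2 * pderiv i (∏ j ∈ t, X j) =
        if i ∉ t then ∏ j ∈ insert i t, (X j : MvPolynomial σ R) else 0 := by
    rw [sq, mul_assoc, X_mul_pderiv_prod_X]
    by_cases hi : i ∈ t <;> simp [hi, Finset.prod_insert]
  calc psum σ R 1 * esymm σ R m - ∑ i, X i ^ 2 * pderiv i (esymm σ R m)
      = ∑ i, ∑ t ∈ Finset.univ.powersetCard m,
          (X i * ∏ j ∈ t, X j - X i ^ 2 * pderiv i (∏ j ∈ t, X j)) := by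
        rw [psum, Finset.sum_mul, ← Finset.sum_sub_distrib]
        simp only [pow_one, esymm, map_sum, Finset.mul_sum, Finset.sum_sub_distrib]
    _ = ∑ i, ∑ u ∈ Finset.univ.powersetCard (m + 1) with i ∈ u, ∏ j ∈ u, X j := by
        simp only [hterm, ← Finset.sum_filter]
        exact Finset.sum_congr rfl fun i _ =>
          Finset.sum_powersetCard_insert (Finset.mem_univ i) m (∏ j ∈ ·, X j)
    _ = (m + 1) • esymm σ R (m + 1) := by
        simp only [Finset.sum_filter]
        rw [Finset.sum_comm, esymm, Finset.smul_sum]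
        refine Finset.sum_congr rfl fun u hu => ?_
        rw [Finset.sum_ite_mem, Finset.univ_inter, Finset.sum_const,
          Finset.mem_powersetCard_univ.1 hu]

end MvPolynomial

/-- For L₁(f) = -∑ᵢ xᵢ² ∂f/∂xᵢ: L₁(hₘ) = -(m+1)h_{m+1} + p₁hₘ and
L₁(eₘ) = (m+1)e_{m+1} - p₁eₘ, for all m ≥ 0. -/
theorem L1_hsymm_esymm (N : ℕ) (m : ℕ) :
    ((- ∑ i : Fin N, X i ^ 2 * pderiv i (hsymm (Fin N) ℚ m))
        = -(((m + 1 : ℕ) : ℚ)) • hsymm (Fin N) ℚ (m + 1)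
          + psum (Fin N) ℚ 1 * hsymm (Fin N) ℚ m) ∧
    ((- ∑ i : Fin N, X i ^ 2 * pderiv i (esymm (Fin N) ℚ m))
        = (((m + 1 : ℕ) : ℚ)) • esymm (Fin N) ℚ (m + 1)
          - psum (Fin N) ℚ 1 * esymm (Fin N) ℚ m) := by
  rw [neg_smul, Nat.cast_smul_eq_nsmul, Nat.cast_smul_eq_nsmul]
  constructor
  · rw [← psum_one_mul_hsymm_add_sum_X_sq_mul_pderiv]
    abel
  · rw [← psum_one_mul_esymm_sub_sum_X_sq_mul_pderiv]
    abel
end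

section
/- In the nilHecke algebra NH₂, the derivation Lₙ defined by Lₙ(x₁) = −x₁^{n+1}, Lₙ(x₂) = −x₂^{n+1}, Lₙ(ψ) = Σ_{k+l=n} x₁ᵏ x₂ˡ ψ respects the dot-slide relation ψx₁ − x₂ψ = 1: applying Lₙ to both sides as a derivation gives equal results, i.e., Lₙ(ψ)x₁ + ψ·(−x₁^{n+1}) − (−x₂^{n+1})ψ − x₂·Lₙ(ψ) = 0. -/
/-- Defining relations of the nilHecke algebra NH₂ on generators x₁ (index 0),
x₂ (index 1) and ψ (index 2): ψ² = 0, ψx₁ = x₂ψ + 1, x₁ψ = ψx₂ + 1, x₁x₂ = x₂x₁. -/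
inductive NHRel : FreeAlgebra ℚ (Fin 3) → FreeAlgebra ℚ (Fin 3) → Prop
  | sq : NHRel (FreeAlgebra.ι ℚ 2 * FreeAlgebra.ι ℚ 2) 0
  | slide1 : NHRel (FreeAlgebra.ι ℚ 2 * FreeAlgebra.ι ℚ 0)
      (FreeAlgebra.ι ℚ 1 * FreeAlgebra.ι ℚ 2 + 1)
  | slide2 : NHRel (FreeAlgebra.ι ℚ 0 * FreeAlgebra.ι ℚ 2)
      (FreeAlgebra.ι ℚ 2 * FreeAlgebra.ι ℚ 1 + 1)
  | comm : NHRel (FreeAlgebra.ι ℚ 0 * FreeAlgebra.ι ℚ 1)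
      (FreeAlgebra.ι ℚ 1 * FreeAlgebra.ι ℚ 0)

/-- The nilHecke algebra on two strands. -/
abbrev NH2 := RingQuot NHRel

noncomputable def nhx1 : NH2 := RingQuot.mkAlgHom ℚ NHRel (FreeAlgebra.ι ℚ 0)
noncomputable def nhx2 : NH2 := RingQuot.mkAlgHom ℚ NHRel (FreeAlgebra.ι ℚ 1)
noncomputable def nhpsi : NH2 := RingQuot.mkAlgHom ℚ NHRel (FreeAlgebra.ι ℚ 2)

/-!
If `ψ x₁ - x₂ ψ = 1` then, telescoping, `ψ x₁ᵐ - x₂ᵐ ψ = ∑_{i<m} x₂ⁱ x₁^{m-1-i}`, which for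
`m = n + 1` is the complete homogeneous sum `S = ∑_{k+l=n} x₁ᵏ x₂ˡ` (as `x₁, x₂` commute).
On the other side `Lₙ(ψ) = S ψ` and `S` commutes with `x₂`, so
`Lₙ(ψ) x₁ - x₂ Lₙ(ψ) = S (ψ x₁ - x₂ ψ) = S`; the two contributions cancel.
-/

open Finset

section DotSlide

variable {R : Type*} [Ring R]

theorem mul_pow_sub_pow_mul_eq_sum (p a b : R) (m : ℕ) :
    p * a ^ m - b ^ m * p = ∑ i ∈ range m, b ^ i * (p * a - b * p) * a ^ (m - 1 - i) := by
  have hterm : ∀ i ∈ range m, b ^ i * (p * a - b * p) * a ^ (m - 1 - i)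
      = b ^ i * p * a ^ (m - i) - b ^ (i + 1) * p * a ^ (m - (i + 1)) := by
    intro i hi
    obtain ⟨j, rfl⟩ := Nat.exists_eq_add_of_lt (mem_range.mp hi)
    rw [show i + j + 1 - 1 - i = j by omega, show i + j + 1 - i = j + 1 by omega,
      show i + j + 1 - (i + 1) = j by omega, pow_succ' a, pow_succ b]
    noncomm_ring
  rw [sum_congr rfl hterm, sum_range_sub' (fun i => b ^ i * p * a ^ (m - i))]
  simp

variable {a b p : R}

theorem mul_pow_sub_pow_mul_of_mul_eq (hslide : p * a = b * p + 1) (m : ℕ) :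
    p * a ^ m - b ^ m * p = ∑ i ∈ range m, b ^ i * a ^ (m - 1 - i) := by
  simp [mul_pow_sub_pow_mul_eq_sum, hslide]

theorem Commute.geom_sum₂_dot_slide (hab : Commute a b) (hslide : p * a = b * p + 1) (n : ℕ) :
    (∑ k ∈ range (n + 1), a ^ k * b ^ (n - k) * p) * a + p * (-(a ^ (n + 1)))
      - (-(b ^ (n + 1))) * p - b * (∑ k ∈ range (n + 1), a ^ k * b ^ (n - k) * p) = 0 := by
  set S := ∑ k ∈ range (n + 1), a ^ k * b ^ (n - k)
  have hpow : p * a ^ (n + 1) - b ^ (n + 1) * p = S := by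
    rw [mul_pow_sub_pow_mul_of_mul_eq hslide, ← hab.geom_sum₂_comm]
    simp only [S, Nat.add_sub_cancel]
  have hbS : Commute b S :=
    Commute.sum_right _ _ _ fun k _ =>
      (hab.symm.pow_right k).mul_right ((Commute.refl b).pow_right _)
  have hsum : S * p * a - b * (S * p) = S := by
    rw [mul_assoc, hslide, ← mul_assoc, hbS.eq]
    noncomm_ring
  rw [← sum_mul]
  calc _ = (S * p * a - b * (S * p)) - (p * a ^ (n + 1) - b ^ (n + 1) * p) := by noncomm_ring
    _ = 0 := by rw [hsum, hpow, sub_self]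

end DotSlide

lemma nh_slide : nhpsi * nhx1 = nhx2 * nhpsi + 1 := by
  simpa [nhx1, nhx2, nhpsi] using RingQuot.mkAlgHom_rel ℚ NHRel.slide1

lemma nh_comm : Commute nhx1 nhx2 := by
  simpa [Commute, SemiconjBy, nhx1, nhx2] using RingQuot.mkAlgHom_rel ℚ NHRel.comm

/-- The derivation Lₙ with Lₙ(xᵢ) = -xᵢ^{n+1}, Lₙ(ψ) = ∑_{k+l=n} x₁ᵏx₂ˡψ respects
the dot-slide relation ψx₁ - x₂ψ = 1:
Lₙ(ψ)x₁ + ψ·(-x₁^{n+1}) - (-x₂^{n+1})·ψ - x₂·Lₙ(ψ) = 0. -/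
theorem wittOp_nilHecke_dot_slide (n : ℕ) :
    (∑ k ∈ Finset.range (n + 1), nhx1 ^ k * nhx2 ^ (n - k) * nhpsi) * nhx1
      + nhpsi * (-(nhx1 ^ (n + 1)))
      - (-(nhx2 ^ (n + 1))) * nhpsi
      - nhx2 * (∑ k ∈ Finset.range (n + 1), nhx1 ^ k * nhx2 ^ (n - k) * nhpsi)
      = 0 :=
  nh_comm.geom_sum₂_dot_slide nh_slide n
end
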